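/- arXiv:2101.10160 — 3 statements merged into one kernel-verified Lean document; each statement's English description precedes it below -/
import Mathlib

section
/- (Shearer's inequality) Let y^1,…,y^L be random variables each taking values in a finite set, let k ≥ 1 be an integer, and let φ be a family of subsets of {1,…,L} such that every index in {1,…,L} belongs to at least k members of φ. Then H(y^1,…,y^L) ≤ (1/k)·Σ_{S∈φ} H(y^S), where y^S denotes the tuple (y^i : i ∈ S). -/
/-! Order the indices and expand by the chain rule: `H(y) = ∑ᵢ H(yⁱ | y^{<i})`, and for each
`s ∈ φ`, `H(yˢ) = ∑_{i ∈ s} H(yⁱ | y^{s, <i}) ≥ ∑_{i ∈ s} H(yⁱ | y^{<i})`, because conditioning on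
more variables can only lower entropy (the log-sum inequality). Summing over `s ∈ φ`, every
nonnegative term `H(yⁱ | y^{<i})` occurs at least `k` times. -/

open MeasureTheory Real

/-- Shannon entropy of a finite-valued random variable `X`, computed from its
distribution under `μ`. -/
noncomputable def entropy {Ω S : Type*} [MeasurableSpace Ω] [Fintype S]
    (μ : Measure Ω) (X : Ω → S) : ℝ :=
  ∑ x : S, Real.negMulLog ((μ (X ⁻¹' {x})).toReal)

/-- Conditional Shannon entropy `H(X | Y)` of finite-valued random variables. -/
noncomputable def condEntropy {Ω S T : Type*} [MeasurableSpace Ω] [Fintype S] [Fintype T]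
    (μ : Measure Ω) (X : Ω → S) (Y : Ω → T) : ℝ :=
  ∑ x : S, ∑ t : T,
    (μ (X ⁻¹' {x} ∩ Y ⁻¹' {t})).toReal *
      Real.log ((μ (Y ⁻¹' {t})).toReal / (μ (X ⁻¹' {x} ∩ Y ⁻¹' {t})).toReal)

open Finset

theorem Real.sum_mul_log_div_le {ι : Type*} (s : Finset ι) (a b : ι → ℝ)
    (ha : ∀ i ∈ s, 0 ≤ a i) (hb : ∀ i ∈ s, 0 ≤ b i) (hab : ∀ i ∈ s, 0 < a i → 0 < b i) :
    ∑ i ∈ s, a i * log (b i / a i) ≤ (∑ i ∈ s, a i) * log ((∑ i ∈ s, b i) / ∑ i ∈ s, a i) := by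
  set A := ∑ i ∈ s, a i
  set B := ∑ i ∈ s, b i
  rcases (sum_nonneg ha).eq_or_lt with hA | hA
  · rw [show A = 0 from hA.symm, zero_mul]
    refine (sum_eq_zero fun i hi => ?_).le
    rw [(sum_eq_zero_iff_of_nonneg ha).1 hA.symm i hi, zero_mul]
  have hB : 0 < B := by
    obtain ⟨i, hi, hai⟩ := exists_lt_of_sum_lt (f := fun _ => 0) (g := a) (by rwa [sum_const_zero])
    exact sum_pos' hb ⟨i, hi, hab i hi hai⟩
  have key : ∀ i ∈ s, a i * log (b i / a i) ≤ a i * log (B / A) + (A * b i / B - a i) := by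
    intro i hi
    rcases (ha i hi).eq_or_lt with hai | hai
    · rw [← hai]
      have := hb i hi
      simp only [zero_mul, sub_zero, zero_add]
      positivity
    have hbi := hab i hi hai
    have hlog := log_le_sub_one_of_pos (x := (b i / a i) / (B / A)) (by positivity)
    rw [log_div (by positivity) (by positivity)] at hlog
    calc a i * log (b i / a i)
        = a i * log (B / A) + a i * (log (b i / a i) - log (B / A)) := by ring
      _ ≤ a i * log (B / A) + a i * ((b i / a i) / (B / A) - 1) := by gcongr
      _ = a i * log (B / A) + (A * b i / B - a i) := by field_simp
  calc ∑ i ∈ s, a i * log (b i / a i) ≤ ∑ i ∈ s, (a i * log (B / A) + (A * b i / B - a i)) :=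
        sum_le_sum key
    _ = A * log (B / A) + (A * B / B - A) := by
        rw [sum_add_distrib, ← sum_mul, sum_sub_distrib, ← sum_div, ← mul_sum]
    _ = A * log (B / A) := by rw [mul_div_cancel_right₀ _ hB.ne', sub_self, add_zero]

theorem Finset.mul_sum_le_sum_sum_of_le_card_filter {ι R : Type*} [Fintype ι] [DecidableEq ι]
    [CommSemiring R] [PartialOrder R] [IsOrderedRing R] (φ : Finset (Finset ι)) {k : ℕ}
    (hcov : ∀ i, k ≤ #(φ.filter (i ∈ ·))) {c : ι → R} (hc : ∀ i, 0 ≤ c i) :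
    k * ∑ i, c i ≤ ∑ s ∈ φ, ∑ i ∈ s, c i := by
  calc k * ∑ i, c i = ∑ i, k * c i := mul_sum _ _ _
    _ ≤ ∑ i, #(φ.filter (i ∈ ·)) * c i := by gcongr with i; exacts [hc i, hcov i]
    _ = ∑ i, ∑ s ∈ φ.filter (i ∈ ·), c i := by simp only [sum_const, nsmul_eq_mul]
    _ = ∑ s ∈ φ, ∑ i ∈ s, c i := sum_comm' (by simp [and_comm])

section Entropy

variable {Ω A B C : Type*} [MeasurableSpace Ω] {μ : Measure Ω}

theorem MeasureTheory.measureReal_inter_preimage_eq_sum [IsFiniteMeasure μ] [MeasurableSpace B]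
    [MeasurableSingletonClass B] {Y : Ω → B} (hY : Measurable Y) {E : Set Ω}
    (hE : MeasurableSet E) (T : Finset B) :
    μ.real (E ∩ Y ⁻¹' T) = ∑ t ∈ T, μ.real (E ∩ Y ⁻¹' {t}) := by
  rw [← Set.biUnion_preimage_singleton, Set.inter_iUnion₂, Finset.set_biUnion_coe,
    measureReal_biUnion_finset]
  · exact ((Set.pairwiseDisjoint_fiber Y _).subset (Set.subset_univ _)).mono
      fun _ => Set.inter_subset_right
  · exact fun t _ => hE.inter (hY (measurableSet_singleton t))


variable [Fintype A] [Fintype B] [Fintype C]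

theorem entropy_eq_sum_negMulLog_measureReal (X : Ω → A) :
    entropy μ X = ∑ x, negMulLog (μ.real (X ⁻¹' {x})) := rfl

theorem condEntropy_eq_sum_measureReal (X : Ω → A) (Y : Ω → B) :
    condEntropy μ X Y = ∑ x, ∑ t, μ.real (X ⁻¹' {x} ∩ Y ⁻¹' {t}) *
      log (μ.real (Y ⁻¹' {t}) / μ.real (X ⁻¹' {x} ∩ Y ⁻¹' {t})) := rfl

theorem entropy_comp_of_injective {f : A → B} (hf : f.Injective) (X : Ω → A) :
    entropy μ (fun ω => f (X ω)) = entropy μ X := by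
  rw [entropy_eq_sum_negMulLog_measureReal, entropy_eq_sum_negMulLog_measureReal]
  refine (Fintype.sum_of_injective f hf _ _ (fun b hb => ?_) fun a => ?_).symm
  · have : (fun ω => f (X ω)) ⁻¹' {b} = ∅ :=
      Set.eq_empty_of_forall_notMem fun ω hω => hb ⟨X ω, hω⟩
    rw [this, measureReal_empty, negMulLog_zero]
  · rw [← Function.comp_def, Set.preimage_comp, ← Set.image_singleton, hf.preimage_image]

theorem entropy_of_subsingleton [IsProbabilityMeasure μ] [Subsingleton A] (X : Ω → A) :
    entropy μ X = 0 := by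
  refine sum_eq_zero fun x _ => ?_
  rw [show X ⁻¹' {x} = Set.univ from Set.eq_univ_of_forall fun ω => Subsingleton.elim _ _,
    ← measureReal_def, probReal_univ, negMulLog_one]

theorem condEntropy_nonneg [IsFiniteMeasure μ] (X : Ω → A) (Y : Ω → B) :
    0 ≤ condEntropy μ X Y := by
  rw [condEntropy_eq_sum_measureReal]
  refine sum_nonneg fun x _ => sum_nonneg fun t _ => ?_
  rcases measureReal_nonneg.eq_or_lt with h | h
  · rw [← h, zero_mul]
  · exact mul_nonneg h.le (log_nonneg ((one_le_div h).2 (measureReal_mono Set.inter_subset_right)))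

theorem entropy_prod_eq_entropy_add_condEntropy [IsFiniteMeasure μ] [MeasurableSpace A]
    [MeasurableSingletonClass A] [MeasurableSpace B] [MeasurableSingletonClass B]
    {X : Ω → A} {Y : Ω → B} (hX : Measurable X) (hY : Measurable Y) :
    entropy μ (fun ω => (X ω, Y ω)) = entropy μ Y + condEntropy μ X Y := by
  set p : A → B → ℝ := fun a b => μ.real (X ⁻¹' {a} ∩ Y ⁻¹' {b})
  set q : B → ℝ := fun b => μ.real (Y ⁻¹' {b})
  have hq : ∀ b, q b = ∑ a, p a b := fun b => by
    simpa [p, q, Set.inter_comm] using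
      measureReal_inter_preimage_eq_sum hX (hY (measurableSet_singleton b)) univ (μ := μ)
  have hpair : entropy μ (fun ω => (X ω, Y ω)) = ∑ a, ∑ b, negMulLog (p a b) := by
    rw [entropy_eq_sum_negMulLog_measureReal, Fintype.sum_prod_type]
    simp only [← Set.singleton_prod_singleton, Set.mk_preimage_prod, p]
  have hcond : condEntropy μ X Y = ∑ a, ∑ b, (negMulLog (p a b) + p a b * log (q b)) := by
    rw [condEntropy_eq_sum_measureReal]
    refine sum_congr rfl fun a _ => sum_congr rfl fun b _ => ?_
    rcases (measureReal_nonneg : 0 ≤ p a b).eq_or_lt with h | h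
    · simp [p, q, ← h]
    · rw [log_div (h.trans_le (measureReal_mono Set.inter_subset_right)).ne' h.ne', negMulLog]
      ring
  have hlog : ∑ a, ∑ b, p a b * log (q b) = -entropy μ Y := by
    rw [sum_comm, entropy_eq_sum_negMulLog_measureReal, ← sum_neg_distrib]
    refine sum_congr rfl fun b _ => ?_
    rw [← sum_mul, ← hq, negMulLog, neg_mul, neg_neg]
  rw [hpair, hcond]
  simp only [sum_add_distrib]
  linarith

theorem condEntropy_le_condEntropy_comp [IsFiniteMeasure μ] [MeasurableSpace A]
    [MeasurableSingletonClass A] [MeasurableSpace B] [MeasurableSingletonClass B]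
    {X : Ω → A} {Y : Ω → B} (hX : Measurable X) (hY : Measurable Y) (g : B → C) :
    condEntropy μ X Y ≤ condEntropy μ X (fun ω => g (Y ω)) := by
  classical
  rw [condEntropy_eq_sum_measureReal, condEntropy_eq_sum_measureReal]
  refine sum_le_sum fun x _ => ?_
  rw [← sum_fiberwise univ g]
  refine sum_le_sum fun c _ => ?_
  have hfiber : (fun ω => g (Y ω)) ⁻¹' {c} = Y ⁻¹' ↑(univ.filter (g · = c)) := by
    ext; simp
  have hjoint := measureReal_inter_preimage_eq_sum (μ := μ) hY (hX (measurableSet_singleton x))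
    (univ.filter (g · = c))
  have hmarg := measureReal_inter_preimage_eq_sum (μ := μ) hY .univ (univ.filter (g · = c))
  simp only [Set.univ_inter] at hmarg
  rw [hfiber, hjoint, hmarg]
  exact Real.sum_mul_log_div_le _ _ _ (fun _ _ => measureReal_nonneg)
    (fun _ _ => measureReal_nonneg)
    fun _ _ h => h.trans_le (measureReal_mono Set.inter_subset_right)

end Entropy

section Chain

variable {Ω ι : Type*} [MeasurableSpace Ω] {μ : Measure Ω} [LinearOrder ι] {S : ι → Type*}
  [∀ i, Fintype (S i)] [∀ i, MeasurableSpace (S i)] [∀ i, MeasurableSingletonClass (S i)]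

theorem entropy_restrict_eq_sum_condEntropy [IsProbabilityMeasure μ] {X : Ω → ∀ i, S i}
    (hX : Measurable X) (t : Finset ι) :
    entropy μ (fun ω => t.restrict (X ω)) =
      ∑ i ∈ t, condEntropy μ (fun ω => X ω i) (fun ω => (t.filter (· < i)).restrict (X ω)) := by
  induction t using Finset.induction_on_max with
  | empty => rw [entropy_of_subsingleton, sum_empty]
  | insert a s hlt ih =>
    have has : a ∉ s := fun h => (hlt a h).false
    have hsplit : Function.Injective fun g : ∀ j : ↥(insert a s), S j =>
        (g ⟨a, mem_insert_self a s⟩, Finset.restrict₂ (subset_insert a s) g) := by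
      intro g g' h
      simp only [Prod.mk.injEq, funext_iff, Finset.restrict₂, Subtype.forall] at h
      funext ⟨j, hj⟩
      rcases mem_insert.1 hj with rfl | hj
      exacts [h.1, h.2 j hj]
    have hfilter_a : (insert a s).filter (· < a) = s := by
      rw [filter_insert, if_neg (lt_irrefl a), filter_true_of_mem hlt]
    have hfilter : ∀ i ∈ s, (insert a s).filter (· < i) = s.filter (· < i) := fun i hi => by
      rw [filter_insert, if_neg (hlt i hi).not_gt]
    rw [← entropy_comp_of_injective hsplit, sum_insert has, hfilter_a,
      sum_congr rfl fun i hi => by rw [hfilter i hi], ← ih, add_comm]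
    exact entropy_prod_eq_entropy_add_condEntropy ((measurable_pi_apply a).comp hX)
      (s.measurable_restrict.comp hX)

end Chain

/-- **Shearer's inequality.** If every index of `{1,…,L}` lies in at least `k`
members of the family `φ` of subsets of `{1,…,L}`, then
`H(y¹,…,y^L) ≤ (1/k) ∑_{s ∈ φ} H(yˢ)`. -/
theorem shearer_inequality
    {Ω : Type*} [MeasurableSpace Ω] (μ : Measure Ω) [IsProbabilityMeasure μ]
    (L : ℕ)
    (S : Fin L → Type*) [∀ i, Fintype (S i)] [∀ i, MeasurableSpace (S i)]
    [∀ i, MeasurableSingletonClass (S i)]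
    (y : ∀ i, Ω → S i) (hy : ∀ i, Measurable (y i))
    (k : ℕ) (hk : 1 ≤ k) (φ : Finset (Finset (Fin L)))
    (hcov : ∀ i : Fin L, k ≤ (φ.filter (fun s => i ∈ s)).card) :
    entropy μ (fun ω => fun i => y i ω)
      ≤ (k : ℝ)⁻¹ * ∑ s ∈ φ, entropy μ (fun ω => fun j : {x : Fin L // x ∈ s} => y j.1 ω) := by
  set X : Ω → ∀ i, S i := fun ω i => y i ω
  have hX : Measurable X := measurable_pi_lambda _ hy
  set c : Fin L → ℝ := fun i =>
    condEntropy μ (y i) (fun ω => (univ.filter (· < i)).restrict (X ω))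
  have hfull : entropy μ X = ∑ i, c i := by
    have hinj : Function.Injective fun f : ∀ i, S i => univ.restrict f := fun f g h =>
      funext fun i => congr_fun h ⟨i, mem_univ i⟩
    rw [← entropy_comp_of_injective hinj]
    exact entropy_restrict_eq_sum_condEntropy hX univ
  have hpart : ∀ s ∈ φ, ∑ i ∈ s, c i ≤ entropy μ (fun ω => s.restrict (X ω)) := fun s _ => by
    rw [entropy_restrict_eq_sum_condEntropy hX s]
    exact sum_le_sum fun i _ => condEntropy_le_condEntropy_comp (hy i)
      ((Finset.measurable_restrict _).comp hX)
      (Finset.restrict₂ (filter_subset_filter _ (subset_univ s)))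
  rw [le_inv_mul_iff₀ (by exact_mod_cast hk), hfull]
  exact (mul_sum_le_sum_sum_of_le_card_filter φ hcov fun i => condEntropy_nonneg _ _).trans
    (sum_le_sum hpart)
end

section
/- (Theorem 1) Let x be a random variable taking values in a finite set 𝒳, let y be a random variable taking values in a finite additive abelian group G, and let f : 𝒳 → G be any function. Define the prediction residual e = y − f(x). Then I(x ; e) = H(e) − H(y | x). Consequently, since H(y | x) does not depend on f, for any two functions f₁, f₂ : 𝒳 → G the corresponding residuals e₁, e₂ satisfy I(x;e₁) − I(x;e₂) = H(e₁) − H(e₂); that is, minimizing the mutual information I(x;e) over f is equivalent to minimizing the error entropy H(e). -/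
open MeasureTheory Real

/-- Mutual information `I(X;Y) = H(X) + H(Y) - H(X,Y)`. -/
noncomputable def mutualInfo {Ω S T : Type*} [MeasurableSpace Ω] [Fintype S] [Fintype T]
    (μ : Measure Ω) (X : Ω → S) (Y : Ω → T) : ℝ :=
  entropy μ X + entropy μ Y - entropy μ (fun ω => (X ω, Y ω))

lemma sum_mul_log_div_aux {G : Type*} [Fintype G] (p : G → ℝ) (hp : ∀ g, 0 ≤ p g) :
    ∑ g, p g * Real.log ((∑ g', p g') / p g)
      = (∑ g, Real.negMulLog (p g)) - Real.negMulLog (∑ g, p g) := by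
  set q := ∑ g', p g' with hq
  have key : ∑ g, p g * Real.log (q / p g)
      = ∑ g, (Real.negMulLog (p g) + p g * Real.log q) := by
    apply Finset.sum_congr rfl
    intro g _
    rcases eq_or_ne (p g) 0 with h | h
    · simp [h, Real.negMulLog]
    · have hpg : 0 < p g := (hp g).lt_of_ne (Ne.symm h)
      have hqpos : 0 < q :=
        lt_of_lt_of_le hpg (Finset.single_le_sum (fun i _ => hp i) (Finset.mem_univ g))
      rw [Real.log_div hqpos.ne' h, Real.negMulLog]
      ring
  rw [key, Finset.sum_add_distrib, ← Finset.sum_mul, ← hq, Real.negMulLog]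
  ring

lemma marginal_aux {Ω G : Type*} [MeasurableSpace Ω] (μ : Measure Ω) [IsProbabilityMeasure μ]
    [Fintype G] [MeasurableSpace G] [MeasurableSingletonClass G]
    (s : Set Ω) (hs : MeasurableSet s) (y : Ω → G) (hy : Measurable y) :
    (μ s).toReal = ∑ g : G, (μ (s ∩ y ⁻¹' {g})).toReal := by
  rw [← ENNReal.toReal_sum (fun g _ => measure_ne_top μ _)]
  congr 1
  have hdecomp : s = ⋃ g ∈ (Finset.univ : Finset G), s ∩ y ⁻¹' {g} := by
    ext ω; simp
  have h1 : Set.PairwiseDisjoint (↑(Finset.univ : Finset G)) (fun g => s ∩ y ⁻¹' {g}) := by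
    intro g _ g' _ hgg'
    simp only [Function.onFun, Set.disjoint_left]
    rintro ω ⟨_, hg⟩ ⟨_, hg'⟩
    simp only [Set.mem_preimage, Set.mem_singleton_iff] at hg hg'
    exact hgg' (hg ▸ hg')
  have h2 : ∀ g ∈ (Finset.univ : Finset G), MeasurableSet (s ∩ y ⁻¹' {g}) :=
    fun g _ => hs.inter (hy (measurableSet_singleton g))
  conv_lhs => rw [hdecomp]
  rw [measure_biUnion_finset h1 h2]

lemma condEntropy_eq_aux {Ω X G : Type*} [MeasurableSpace Ω] (μ : Measure Ω)
    [IsProbabilityMeasure μ]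
    [Fintype X] [MeasurableSpace X] [MeasurableSingletonClass X]
    [Fintype G] [MeasurableSpace G] [MeasurableSingletonClass G]
    (x : Ω → X) (y : Ω → G) (hx : Measurable x) (hy : Measurable y) :
    condEntropy μ y x = entropy μ (fun ω => (x ω, y ω)) - entropy μ x := by
  have hpre : ∀ (a : X) (g : G),
      (fun ω => (x ω, y ω)) ⁻¹' {(a, g)} = x ⁻¹' {a} ∩ y ⁻¹' {g} := by
    intro a g; ext ω; simp [Prod.ext_iff]
  unfold condEntropy entropy
  rw [Fintype.sum_prod_type, Finset.sum_comm]
  rw [← Finset.sum_sub_distrib]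
  apply Finset.sum_congr rfl
  intro a _
  have hm : (μ (x ⁻¹' {a})).toReal = ∑ g : G, (μ (x ⁻¹' {a} ∩ y ⁻¹' {g})).toReal :=
    marginal_aux μ _ (hx (measurableSet_singleton a)) y hy
  calc ∑ g : G, (μ (y ⁻¹' {g} ∩ x ⁻¹' {a})).toReal *
        Real.log ((μ (x ⁻¹' {a})).toReal / (μ (y ⁻¹' {g} ∩ x ⁻¹' {a})).toReal)
      = ∑ g : G, (μ (x ⁻¹' {a} ∩ y ⁻¹' {g})).toReal *
        Real.log ((∑ g' : G, (μ (x ⁻¹' {a} ∩ y ⁻¹' {g'})).toReal)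
          / (μ (x ⁻¹' {a} ∩ y ⁻¹' {g})).toReal) := by
        apply Finset.sum_congr rfl
        intro g _
        rw [Set.inter_comm, hm]
    _ = (∑ g : G, Real.negMulLog ((μ (x ⁻¹' {a} ∩ y ⁻¹' {g})).toReal))
          - Real.negMulLog (∑ g : G, (μ (x ⁻¹' {a} ∩ y ⁻¹' {g})).toReal) :=
        sum_mul_log_div_aux _ (fun g => ENNReal.toReal_nonneg)
    _ = (∑ g : G, Real.negMulLog ((μ ((fun ω => (x ω, y ω)) ⁻¹' {(a, g)})).toReal))
          - Real.negMulLog ((μ (x ⁻¹' {a})).toReal) := by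
        rw [← hm]
        congr 1
        exact Finset.sum_congr rfl fun g _ => by rw [hpre]

lemma joint_entropy_residual_aux {Ω X G : Type*} [MeasurableSpace Ω] (μ : Measure Ω)
    [Fintype X] [Fintype G] [AddCommGroup G]
    (x : Ω → X) (y : Ω → G) (f : X → G) :
    entropy μ (fun ω => (x ω, y ω - f (x ω))) = entropy μ (fun ω => (x ω, y ω)) := by
  unfold entropy
  refine Fintype.sum_equiv
    ⟨fun p => (p.1, p.2 + f p.1), fun p => (p.1, p.2 - f p.1), fun p => by simp, fun p => by simp⟩
    _ _ (fun p => ?_)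
  have hset : (fun ω => (x ω, y ω - f (x ω))) ⁻¹' {p}
      = (fun ω => (x ω, y ω)) ⁻¹' {(p.1, p.2 + f p.1)} := by
    ext ω
    simp only [Set.mem_preimage, Set.mem_singleton_iff, Prod.ext_iff, Equiv.coe_fn_mk]
    constructor
    · rintro ⟨h1, h2⟩
      exact ⟨h1, by rw [h1] at h2; rw [← h2]; abel⟩
    · rintro ⟨h1, h2⟩
      exact ⟨h1, by rw [h1, h2]; abel⟩
  rw [hset]
  rfl

/-- **(Theorem 1.)** For a finite-valued input `x`, a target `y` taking values in a
finite additive abelian group `G`, and any predictor `f : 𝒳 → G` with residual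
`e = y - f(x)`, one has `I(x ; e) = H(e) - H(y | x)`. Since `H(y | x)` does not
depend on `f`, for any two predictors `f₁, f₂` the residuals satisfy
`I(x;e₁) - I(x;e₂) = H(e₁) - H(e₂)`: minimizing `I(x;e)` over `f` is equivalent to
minimizing the error entropy `H(e)`. -/
theorem mutualInfo_residual_eq_entropy_sub_condEntropy
    {Ω X G : Type*} [MeasurableSpace Ω] (μ : Measure Ω) [IsProbabilityMeasure μ]
    [Fintype X] [MeasurableSpace X] [MeasurableSingletonClass X]
    [Fintype G] [AddCommGroup G] [MeasurableSpace G] [MeasurableSingletonClass G]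
    (x : Ω → X) (y : Ω → G) (hx : Measurable x) (hy : Measurable y) :
    (∀ f : X → G,
      mutualInfo μ x (fun ω => y ω - f (x ω))
        = entropy μ (fun ω => y ω - f (x ω)) - condEntropy μ y x) ∧
    (∀ f₁ f₂ : X → G,
      mutualInfo μ x (fun ω => y ω - f₁ (x ω))
          - mutualInfo μ x (fun ω => y ω - f₂ (x ω))
        = entropy μ (fun ω => y ω - f₁ (x ω))
          - entropy μ (fun ω => y ω - f₂ (x ω))) := by
  have main : ∀ f : X → G,
      mutualInfo μ x (fun ω => y ω - f (x ω))
        = entropy μ (fun ω => y ω - f (x ω)) - condEntropy μ y x := by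
    intro f
    rw [mutualInfo, joint_entropy_residual_aux μ x y f, condEntropy_eq_aux μ x y hx hy]
    ring
  exact ⟨main, fun f₁ f₂ => by rw [main f₁, main f₂]; ring⟩
end

section
/- Let α > 0, α ≠ 1, and let A^1,…,A^L (L ≥ 2) be N×N normalized Gram matrices (real symmetric positive semidefinite with all diagonal entries equal to 1/N). Then for every i ∈ {1,…,L}, S_α(A^{[L]}) ≥ S_α(A^{[L]∖i}), where A^{[L]∖i} is the normalized Hadamard product of all matrices except A^i. Summing over i, L·S_α(A^{[L]}) ≥ Σ_{i=1}^L S_α(A^{[L]∖i}), hence Σ_{i=1}^L S_α(A^{[L]∖i}) − (L−1)·S_α(A^{[L]}) ≤ S_α(A^{[L]}); i.e., if S_α(A^{[L]}) > 0, the matrix-based normalized dual total correlation D_α* = (Σ_{i=1}^L S_α(A^{[L]∖i}) − (L−1)·S_α(A^{[L]})) / S_α(A^{[L]}) satisfies D_α* ≤ 1. -/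
open Matrix

/-- Matrix-based Rényi `α`-entropy
`S_α(A) = (1/(1-α))·log₂(∑ᵢ λᵢ(A)^α)` of a (Hermitian, i.e. real symmetric)
matrix `A`, via its eigenvalues (junk value `0` if `A` is not Hermitian). -/
noncomputable def renyiEntropy {N : ℕ} (α : ℝ) (A : Matrix (Fin N) (Fin N) ℝ) : ℝ :=
  if hA : A.IsHermitian then
    (1 / (1 - α)) * Real.logb 2 (∑ i, hA.eigenvalues i ^ α)
  else 0

/-- Trace-normalized Hadamard (entrywise) product of the family of Gram matrices
indexed by the subset `s`. -/
noncomputable def jointGram {N L : ℕ} (A : Fin L → Matrix (Fin N) (Fin N) ℝ)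
    (s : Finset (Fin L)) : Matrix (Fin N) (Fin N) ℝ :=
  (Matrix.trace (Matrix.of fun i j => ∏ k ∈ s, A k i j))⁻¹ •
    (Matrix.of fun i j => ∏ k ∈ s, A k i j)

/-!
Hadamard multiplication by a correlation matrix `C` (positive semidefinite, unit diagonal) can
only spread out a spectrum. If `u_k` and `v_l` are orthonormal eigenbases of `P` and `P ⊙ C`, then
`λ_l(P ⊙ C) = ∑_k T_lk λ_k(P)` with `T_lk = (v_l ⊙ u_k)ᵀ C (v_l ⊙ u_k)`, and completeness of the
two bases makes `T` doubly stochastic. Hence `∑ f(λ(P ⊙ C)) ≤ ∑ f(λ(P))` for every convex `f`,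
and `f = ± x^α` gives `S_α(P) ≤ S_α(P ⊙ C)`. Adjoining `A^i` to a normalized Hadamard product is
Hadamard multiplication by the correlation matrix `N • A^i`, so `S_α(A^S)` is monotone in `S`;
the bounds on the dual total correlation follow by summing over `i`.
-/

section OrthonormalBasis

variable {n : Type*} [Fintype n]

theorem OrthonormalBasis.sum_apply_mul_self (b : OrthonormalBasis n ℝ (EuclideanSpace ℝ n))
    (k : n) : ∑ i, b k i * b k i = 1 := by
  have h := real_inner_self_eq_norm_sq (b k)
  rw [b.orthonormal.1 k, one_pow, PiLp.inner_apply] at h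
  simpa [sq] using h

theorem OrthonormalBasis.sum_apply_mul_apply [DecidableEq n]
    (b : OrthonormalBasis n ℝ (EuclideanSpace ℝ n)) (i j : n) :
    ∑ k, b k i * b k j = if i = j then 1 else 0 := by
  simpa [EuclideanSpace.inner_single_left, EuclideanSpace.inner_single_right, PiLp.single_apply,
    mul_comm, eq_comm] using
    b.sum_inner_mul_inner (EuclideanSpace.single i 1) (EuclideanSpace.single j 1)

theorem OrthonormalBasis.sum_dotProduct_mul_mulVec [DecidableEq n]
    (b : OrthonormalBasis n ℝ (EuclideanSpace ℝ n)) (C : Matrix n n ℝ) (x : n → ℝ) :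
    ∑ k, (x * ⇑(b k)) ⬝ᵥ (C *ᵥ (x * ⇑(b k))) = ∑ i, x i * x i * C i i :=
  calc ∑ k, (x * ⇑(b k)) ⬝ᵥ (C *ᵥ (x * ⇑(b k)))
      = ∑ i, ∑ j, x i * C i j * x j * ∑ k, b k i * b k j := by
        simp only [dotProduct, mulVec, Pi.mul_apply, Finset.mul_sum]
        rw [Finset.sum_comm]
        refine Finset.sum_congr rfl fun i _ => ?_
        rw [Finset.sum_comm]
        exact Finset.sum_congr rfl fun j _ => Finset.sum_congr rfl fun k _ => by ring
    _ = ∑ i, x i * x i * C i i := by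
        simp [b.sum_apply_mul_apply, mul_right_comm]

end OrthonormalBasis

theorem ConvexOn.sum_comp_mulVec_le {n : Type*} [Fintype n] [DecidableEq n] {s : Set ℝ}
    {f : ℝ → ℝ} (hf : ConvexOn ℝ s f) {T : Matrix n n ℝ} (hT : T ∈ doublyStochastic ℝ n)
    {p : n → ℝ} (hp : ∀ k, p k ∈ s) :
    ∑ l, f ((T *ᵥ p) l) ≤ ∑ k, f (p k) :=
  calc ∑ l, f ((T *ᵥ p) l) = ∑ l, f (∑ k, T l k • p k) := by simp [mulVec, dotProduct]
    _ ≤ ∑ l, ∑ k, T l k • f (p k) := Finset.sum_le_sum fun l _ =>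
        hf.map_sum_le (fun _ _ => nonneg_of_mem_doublyStochastic hT)
          (sum_row_of_mem_doublyStochastic hT l) (fun k _ => hp k)
    _ = ∑ k, f (p k) := by
        rw [Finset.sum_comm]
        simp [← Finset.sum_mul, sum_col_of_mem_doublyStochastic hT]

namespace Matrix

variable {n : Type*} [Fintype n]

theorem trace_hadamard_of_diag_eq {R : Type*} [CommSemiring R] (A : Matrix n n R)
    {B : Matrix n n R} {c : R} (hB : ∀ i, B i i = c) : (A ⊙ B).trace = A.trace * c := by
  simp [trace, hB, Finset.sum_mul]

open scoped ComplexOrder in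
theorem posSemidef_hadamard_prod {𝕜 ι : Type*} [RCLike 𝕜] {A : ι → Matrix n n 𝕜}
    (hA : ∀ k, (A k).PosSemidef) (s : Finset ι) :
    (of fun i j => ∏ k ∈ s, A k i j).PosSemidef := by
  classical
  induction s using Finset.induction_on with
  | empty => simpa [vecMulVec] using posSemidef_vecMulVec_self_star (1 : n → 𝕜)
  | insert a s ha ih =>
    have h : (of fun i j => ∏ k ∈ insert a s, A k i j) =
        (of fun i j => ∏ k ∈ s, A k i j) ⊙ A a := by
      ext i j
      simp [Finset.prod_insert ha, mul_comm]
    rw [h]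
    exact ih.hadamard (hA a)

variable [DecidableEq n]

theorem PosSemidef.sum_rpow_eigenvalues_pos {A : Matrix n n ℝ} (hA : A.PosSemidef) (hA0 : A ≠ 0)
    (α : ℝ) : 0 < ∑ k, hA.1.eigenvalues k ^ α := by
  obtain ⟨k, hk⟩ := Function.ne_iff.1 (mt hA.1.eigenvalues_eq_zero_iff.1 hA0)
  exact Finset.sum_pos' (fun l _ => Real.rpow_nonneg (hA.eigenvalues_nonneg l) α)
    ⟨k, Finset.mem_univ k, Real.rpow_pos_of_pos ((hA.eigenvalues_nonneg k).lt_of_ne' hk) α⟩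

namespace IsHermitian

theorem apply_eq_sum_eigenvalues_mul {A : Matrix n n ℝ} (hA : A.IsHermitian) (i j : n) :
    A i j = ∑ k, hA.eigenvalues k * hA.eigenvectorBasis k i * hA.eigenvectorBasis k j := by
  conv_lhs => rw [hA.spectral_theorem]
  simp [mul_apply, Unitary.conjStarAlgAut_apply, diagonal_apply, mul_comm]

theorem dotProduct_hadamard_mulVec {P : Matrix n n ℝ} (hP : P.IsHermitian) (C : Matrix n n ℝ)
    (x : n → ℝ) :
    x ⬝ᵥ ((P ⊙ C) *ᵥ x) = ∑ k, hP.eigenvalues k *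
      ((x * ⇑(hP.eigenvectorBasis k)) ⬝ᵥ (C *ᵥ (x * ⇑(hP.eigenvectorBasis k)))) := by
  simp only [dotProduct, mulVec, hadamard_apply, hP.apply_eq_sum_eigenvalues_mul, Pi.mul_apply,
    Finset.mul_sum, Finset.sum_mul]
  conv_lhs => enter [2, i]; rw [Finset.sum_comm]
  rw [Finset.sum_comm]
  exact Finset.sum_congr rfl fun k _ => Finset.sum_congr rfl fun i _ =>
    Finset.sum_congr rfl fun j _ => by ring

theorem exists_mem_doublyStochastic_eigenvalues_hadamard_eq {P C : Matrix n n ℝ}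
    (hP : P.IsHermitian) (hC : C.PosSemidef) (hCd : ∀ i, C i i = 1) :
    ∃ T ∈ doublyStochastic ℝ n, (hP.hadamard hC.1).eigenvalues = T *ᵥ hP.eigenvalues := by
  set u := hP.eigenvectorBasis
  set v := (hP.hadamard hC.1).eigenvectorBasis
  refine ⟨of fun l k => (⇑(v l) * ⇑(u k)) ⬝ᵥ (C *ᵥ (⇑(v l) * ⇑(u k))), ?_, ?_⟩
  · rw [mem_doublyStochastic_iff_sum]
    refine ⟨fun l k => ?_, fun l => ?_, fun k => ?_⟩
    · simpa using hC.dotProduct_mulVec_nonneg (v l * u k)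
    · simp [u.sum_dotProduct_mul_mulVec, hCd, v.sum_apply_mul_self]
    · simp_rw [mul_comm (v _ : n → ℝ)]
      simp [v.sum_dotProduct_mul_mulVec, hCd, u.sum_apply_mul_self]
  · ext l
    rw [eigenvalues_eq, RCLike.re_to_real, star_trivial, hP.dotProduct_hadamard_mulVec]
    simp only [mulVec, dotProduct, of_apply]
    exact Finset.sum_congr rfl fun k _ => mul_comm _ _

theorem sum_comp_eigenvalues_hadamard_le {P C : Matrix n n ℝ} (hP : P.IsHermitian)
    (hC : C.PosSemidef) (hCd : ∀ i, C i i = 1) {s : Set ℝ} {f : ℝ → ℝ} (hf : ConvexOn ℝ s f)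
    (hs : ∀ k, hP.eigenvalues k ∈ s) :
    ∑ l, f ((hP.hadamard hC.1).eigenvalues l) ≤ ∑ k, f (hP.eigenvalues k) := by
  obtain ⟨T, hT, hTeig⟩ := hP.exists_mem_doublyStochastic_eigenvalues_hadamard_eq hC hCd
  rw [hTeig]
  exact hf.sum_comp_mulVec_le hT hs

end IsHermitian

end Matrix

theorem renyiEntropy_le_hadamard {N : ℕ} {α : ℝ} (hα : 0 ≤ α) {P C : Matrix (Fin N) (Fin N) ℝ}
    (hP : P.PosSemidef) (hC : C.PosSemidef) (hCd : ∀ i, C i i = 1) :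
    renyiEntropy α P ≤ renyiEntropy α (P ⊙ C) := by
  obtain rfl | hP0 := eq_or_ne P 0
  · simp
  have hPC0 : P ⊙ C ≠ 0 := by
    rwa [Ne, ← (hP.hadamard hC).trace_eq_zero_iff, trace_hadamard_of_diag_eq P hCd, mul_one,
      hP.trace_eq_zero_iff]
  have hPpos := hP.sum_rpow_eigenvalues_pos hP0 α
  have hPCpos := (hP.hadamard hC).sum_rpow_eigenvalues_pos hPC0 α
  rw [renyiEntropy, renyiEntropy, dif_pos hP.1, dif_pos (hP.1.hadamard hC.1)]
  rcases lt_trichotomy α 1 with hlt | rfl | hgt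
  · have h := hP.1.sum_comp_eigenvalues_hadamard_le hC hCd (Real.concaveOn_rpow hα hlt.le).neg
      hP.eigenvalues_nonneg
    simp only [Pi.neg_apply, Finset.sum_neg_distrib, neg_le_neg_iff] at h
    exact mul_le_mul_of_nonneg_left (Real.logb_le_logb_of_le one_lt_two hPpos h)
      (one_div_nonneg.2 (sub_nonneg.2 hlt.le))
  · simp
  · have h := hP.1.sum_comp_eigenvalues_hadamard_le hC hCd (convexOn_rpow hgt.le)
      hP.eigenvalues_nonneg
    exact mul_le_mul_of_nonpos_left (Real.logb_le_logb_of_le one_lt_two hPCpos h)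
      (one_div_nonpos.2 (sub_nonpos.2 hgt.le))

section JointGram

variable {N L : ℕ} {A : Fin L → Matrix (Fin N) (Fin N) ℝ}

theorem posSemidef_jointGram (hA : ∀ k, (A k).PosSemidef) (s : Finset (Fin L)) :
    (jointGram A s).PosSemidef :=
  have hX := posSemidef_hadamard_prod hA s
  hX.smul (inv_nonneg.2 hX.trace_nonneg)

theorem jointGram_insert {c : ℝ} {i : Fin L} (hdiag : ∀ j, A i j j = c) {s : Finset (Fin L)}
    (hi : i ∉ s) : jointGram A (insert i s) = jointGram A s ⊙ (c⁻¹ • A i) := by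
  set X : Matrix (Fin N) (Fin N) ℝ := of fun a b => ∏ k ∈ s, A k a b
  have hX : (of fun a b => ∏ k ∈ insert i s, A k a b) = X ⊙ A i := by
    ext a b
    simp [X, Finset.prod_insert hi, mul_comm]
  rw [jointGram, jointGram, hX, trace_hadamard_of_diag_eq X hdiag, hadamard_smul, smul_hadamard,
    smul_smul, mul_inv, mul_comm]

theorem renyiEntropy_jointGram_le_insert {α c : ℝ} (hα : 0 ≤ α) (hc : 0 < c)
    (hA : ∀ k, (A k).PosSemidef) (hdiag : ∀ k j, A k j j = c) (i : Fin L) (s : Finset (Fin L)) :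
    renyiEntropy α (jointGram A s) ≤ renyiEntropy α (jointGram A (insert i s)) := by
  by_cases hi : i ∈ s
  · rw [Finset.insert_eq_of_mem hi]
  rw [jointGram_insert (hdiag i) hi]
  exact renyiEntropy_le_hadamard hα (posSemidef_jointGram hA s)
    ((hA i).smul (inv_nonneg.2 hc.le)) (by simp [hdiag, hc.ne'])

theorem renyiEntropy_jointGram_mono {α c : ℝ} (hα : 0 ≤ α) (hc : 0 < c)
    (hA : ∀ k, (A k).PosSemidef) (hdiag : ∀ k j, A k j j = c) {s t : Finset (Fin L)}
    (hst : s ⊆ t) : renyiEntropy α (jointGram A s) ≤ renyiEntropy α (jointGram A t) := by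
  rw [← Finset.sdiff_union_of_subset hst]
  induction t \ s using Finset.induction_on with
  | empty => rw [Finset.empty_union]
  | insert i u _ ih =>
    rw [Finset.insert_union]
    exact ih.trans (renyiEntropy_jointGram_le_insert hα hc hA hdiag i _)

end JointGram

theorem matrix_dual_total_correlation_le_one_general {N L : ℕ} (hN : 0 < N)
    (α : ℝ) (hα : 0 < α)
    (A : Fin L → Matrix (Fin N) (Fin N) ℝ)
    (hpsd : ∀ i, (A i).PosSemidef)
    (hdiag : ∀ i, ∀ j, A i j j = 1 / (N : ℝ)) :
    (∀ i : Fin L,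
      renyiEntropy α (jointGram A (Finset.univ.erase i))
        ≤ renyiEntropy α (jointGram A Finset.univ)) ∧
    (∑ i : Fin L, renyiEntropy α (jointGram A (Finset.univ.erase i)))
      ≤ (L : ℝ) * renyiEntropy α (jointGram A Finset.univ) ∧
    (∑ i : Fin L, renyiEntropy α (jointGram A (Finset.univ.erase i)))
        - (L - 1 : ℝ) * renyiEntropy α (jointGram A Finset.univ)
      ≤ renyiEntropy α (jointGram A Finset.univ) ∧
    (0 < renyiEntropy α (jointGram A Finset.univ) →
      ((∑ i : Fin L, renyiEntropy α (jointGram A (Finset.univ.erase i)))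
          - (L - 1 : ℝ) * renyiEntropy α (jointGram A Finset.univ)) /
        renyiEntropy α (jointGram A Finset.univ) ≤ 1) := by
  have hle : ∀ i : Fin L, renyiEntropy α (jointGram A (Finset.univ.erase i))
      ≤ renyiEntropy α (jointGram A Finset.univ) := fun i =>
    renyiEntropy_jointGram_mono hα.le (one_div_pos.2 (Nat.cast_pos.2 hN)) hpsd hdiag
      (Finset.erase_subset i _)
  have hsum : ∑ i : Fin L, renyiEntropy α (jointGram A (Finset.univ.erase i))
      ≤ (L : ℝ) * renyiEntropy α (jointGram A Finset.univ) := by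
    simpa using Finset.sum_le_sum fun i (_ : i ∈ Finset.univ) => hle i
  exact ⟨hle, hsum, by linarith, fun hpos => (div_le_one hpos).2 (by linarith)⟩

/-- For normalized Gram matrices: `S_α(A^{[L]}) ≥ S_α(A^{[L]∖i})` for every `i`;
summing over `i`, `L·S_α(A^{[L]}) ≥ ∑ᵢ S_α(A^{[L]∖i})`, hence
`∑ᵢ S_α(A^{[L]∖i}) - (L-1)·S_α(A^{[L]}) ≤ S_α(A^{[L]})`; i.e. when
`S_α(A^{[L]}) > 0` the matrix-based normalized dual total correlation `D_α*` is at
most `1`. -/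
theorem matrix_dual_total_correlation_le_one {N L : ℕ} (hN : 0 < N) (hL : 2 ≤ L)
    (α : ℝ) (hα : 0 < α) (hα1 : α ≠ 1)
    (A : Fin L → Matrix (Fin N) (Fin N) ℝ)
    (hpsd : ∀ i, (A i).PosSemidef)
    (hdiag : ∀ i, ∀ j, A i j j = 1 / (N : ℝ)) :
    (∀ i : Fin L,
      renyiEntropy α (jointGram A (Finset.univ.erase i))
        ≤ renyiEntropy α (jointGram A Finset.univ)) ∧
    (∑ i : Fin L, renyiEntropy α (jointGram A (Finset.univ.erase i)))
      ≤ (L : ℝ) * renyiEntropy α (jointGram A Finset.univ) ∧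
    (∑ i : Fin L, renyiEntropy α (jointGram A (Finset.univ.erase i)))
        - (L - 1 : ℝ) * renyiEntropy α (jointGram A Finset.univ)
      ≤ renyiEntropy α (jointGram A Finset.univ) ∧
    (0 < renyiEntropy α (jointGram A Finset.univ) →
      ((∑ i : Fin L, renyiEntropy α (jointGram A (Finset.univ.erase i)))
          - (L - 1 : ℝ) * renyiEntropy α (jointGram A Finset.univ)) /
        renyiEntropy α (jointGram A Finset.univ) ≤ 1) :=
  matrix_dual_total_correlation_le_one_general hN α hα A hpsd hdiag
end
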